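/- Let p be a prime, d ≥ 2 and n ≥ 1 integers, and T : (𝔽_p^n)^d → 𝔽_p a d-tensor. Then the analytic rank of T is at most the partition rank of T, i.e., arank(T) ≤ prank(T). -/

import Mathlib

/-- A `d`-tensor on `𝔽_p^n`: a multilinear form `T : (𝔽_p^n)^d → 𝔽_p`. -/
abbrev Tensor (p n d : ℕ) :=
  MultilinearMap (ZMod p) (fun _ : Fin d => (Fin n → ZMod p)) (ZMod p)

/-- `T` has partition rank `1` if there exist a partition of `{1,…,d}` into two nonempty
sets and multilinear forms `T₁`, `T₂` on the respective sets of variables with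
`T(x_1,…,x_d) = T₁(x_{i_1},…,x_{i_a})·T₂(x_{j_1},…,x_{j_b})`. -/
def PRankOne {p n d : ℕ} (T : Tensor p n d) : Prop :=
  ∃ A : Finset (Fin d), A.Nonempty ∧ A ≠ Finset.univ ∧
    ∃ (T₁ : MultilinearMap (ZMod p) (fun _ : {i // i ∈ A} => (Fin n → ZMod p)) (ZMod p))
      (T₂ : MultilinearMap (ZMod p) (fun _ : {i // i ∉ A} => (Fin n → ZMod p)) (ZMod p)),
      ∀ x, T x = T₁ (fun i => x i.1) * T₂ (fun i => x i.1)

/-- The partition rank of `T`: the smallest `r` such that `T` is a sum of `r` tensors each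
of partition rank `1` (and `prank 0 = 0`). -/
noncomputable def prank {p n d : ℕ} (T : Tensor p n d) : ℕ :=
  sInf {r | ∃ f : Fin r → Tensor p n d, (∀ i, PRankOne (f i)) ∧ T = ∑ i, f i}

/-- The bias of a `d`-tensor `T` with respect to a nontrivial additive character `χ`:
`bias(T) = E_{x_1,…,x_d ∈ 𝔽_p^n} χ(T(x_1,…,x_d))` (a nonnegative real number, recorded here
via the real part). -/
noncomputable def bias {p n d : ℕ} [NeZero p] (T : Tensor p n d)
    (χ : AddChar (ZMod p) ℂ) : ℂ :=
  (∑ x : Fin d → (Fin n → ZMod p), χ (T x)) / (Fintype.card (Fin d → (Fin n → ZMod p)) : ℂ)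

/-- The analytic rank of a `d`-tensor: `arank(T) = −log_p bias(T)`. -/
noncomputable def arank {p n d : ℕ} [NeZero p] (T : Tensor p n d)
    (χ : AddChar (ZMod p) ℂ) : ℝ :=
  - Real.logb p (bias T χ).re

/-!
Write `T = ∑_{i<r} A_i B_i` with `r = prank T`, where each `A_i` depends only on a nonempty set
`S_i` of coordinates avoiding a fixed coordinate `j` and is additive in each of them. Averaging
`χ ∘ T` over `x_j` gives `1` or `0` on each fibre, and `1` wherever `T` vanishes identically in
`x_j`, so `bias T` is at least the density of those fibres, which contain the common zeros of the
`A_i`. These have density at least `p^{-r}`: once all coordinates but one are fixed, the forms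
involving that coordinate are additive in it, so their common kernel has index at most
`p ^ #(those forms)`; induction on the coordinates gives the bound.
-/

open Finset Function

structure IsMultiadditiveOn {ι W : Type*} {β : ι → Type*} [DecidableEq ι] [∀ i, Add (β i)]
    [Add W] (A : (∀ i, β i) → W) (S : Set ι) : Prop where
  dependsOn : DependsOn A S
  map_update_add : ∀ j ∈ S, ∀ (x : ∀ i, β i) (a b : β j),
    A (update x j (a + b)) = A (update x j a) + A (update x j b)

theorem AddMonoidHom.card_le_card_mul_card_ker {G H : Type*} [AddGroup G] [Fintype G]
    [AddGroup H] [Fintype H] [DecidableEq H] (f : G →+ H) :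
    Fintype.card G ≤ Fintype.card H * #{g | f g = 0} := by
  have hker : Nat.card f.ker = #{g | f g = 0} := by
    rw [Nat.card_eq_fintype_card, Fintype.card_subtype]
    simp only [AddMonoidHom.mem_ker]
  rw [← Nat.card_eq_fintype_card, ← f.ker.card_mul_index, AddSubgroup.index_ker, hker, mul_comm,
    ← Nat.card_eq_fintype_card (α := H)]
  exact Nat.mul_le_mul_right _ (Nat.card_le_card_of_injective _ Subtype.coe_injective)

theorem sum_sum_update_eq_card_smul {ι M : Type*} {β : ι → Type*} [Fintype ι] [DecidableEq ι]
    [∀ i, Fintype (β i)] [AddCommMonoid M] (j : ι) (g : (∀ i, β i) → M) :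
    ∑ x, ∑ v, g (update x j v) = Fintype.card (β j) • ∑ x, g x := by
  let e : (∀ i, β i) × β j → (∀ i, β i) × β j := fun xv => (update xv.1 j xv.2, xv.1 j)
  have he : Involutive e := fun xv => by simp [e]
  rw [← Fintype.sum_prod_type',
    Fintype.sum_equiv he.toPerm (fun xv => g (update xv.1 j xv.2)) (fun xv => g xv.1) fun _ => rfl,
    Fintype.sum_prod_type]
  simp [smul_sum]

section ZeroCount

variable {ι κ W : Type*} [DecidableEq ι] {β : ι → Type*} [∀ i, Fintype (β i)]
  [∀ i, AddGroup (β i)] [AddGroup W] [Fintype W] [DecidableEq W]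
  {A : κ → (∀ i, β i) → W} {S : κ → Finset ι}

theorem card_le_pow_mul_card_update_zeros (hA : ∀ k, IsMultiadditiveOn (A k) (S k))
    (I : Finset κ) (j : ι) {x : ∀ i, β i} (hx : ∀ k ∈ I, j ∉ S k → A k x = 0) :
    Fintype.card (β j) ≤
      Fintype.card W ^ #{k ∈ I | j ∈ S k} * #{v | ∀ k ∈ I, A k (update x j v) = 0} := by
  classical
  let F : β j →+ ({k // k ∈ I.filter (j ∈ S ·)} → W) :=
    AddMonoidHom.mk' (fun v k => A k (update x j v)) fun a b =>
      funext fun k => (hA k).map_update_add j (mem_filter.1 k.2).2 x a b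
  have hF := F.card_le_card_mul_card_ker
  rw [Fintype.card_fun, Fintype.card_coe] at hF
  refine hF.trans (Nat.mul_le_mul_left _ (card_le_card fun v hv => ?_))
  simp only [mem_filter, mem_univ, true_and, funext_iff, Pi.zero_apply] at hv ⊢
  intro k hk
  by_cases hjk : j ∈ S k
  · exact hv ⟨k, mem_filter.2 ⟨hk, hjk⟩⟩
  · rw [(hA k).dependsOn fun i hi => update_of_ne (ne_of_mem_of_not_mem hi hjk) v x]
    exact hx k hk hjk

theorem card_zeros_le_pow_mul_card_zeros [Fintype ι] (hA : ∀ k, IsMultiadditiveOn (A k) (S k))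
    (I : Finset κ) (j : ι) :
    #{x | ∀ k ∈ I, j ∉ S k → A k x = 0} ≤
      Fintype.card W ^ #{k ∈ I | j ∈ S k} * #{x | ∀ k ∈ I, A k x = 0} := by
  set c := Fintype.card W ^ #{k ∈ I | j ∈ S k}
  refine Nat.le_of_mul_le_mul_left ?_ (Fintype.card_pos (α := β j))
  calc Fintype.card (β j) * #{x | ∀ k ∈ I, j ∉ S k → A k x = 0}
      = ∑ x with ∀ k ∈ I, j ∉ S k → A k x = 0, Fintype.card (β j) := by
        rw [sum_const, smul_eq_mul, mul_comm]
    _ ≤ ∑ x with ∀ k ∈ I, j ∉ S k → A k x = 0,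
          c * #{v | ∀ k ∈ I, A k (update x j v) = 0} :=
        sum_le_sum fun x hx => card_le_pow_mul_card_update_zeros hA I j (mem_filter.1 hx).2
    _ ≤ ∑ x, c * #{v | ∀ k ∈ I, A k (update x j v) = 0} :=
        sum_le_sum_of_subset (filter_subset _ _)
    _ = c * (Fintype.card (β j) • ∑ x, if ∀ k ∈ I, A k x = 0 then 1 else 0) := by
        rw [← sum_sum_update_eq_card_smul j, mul_sum]
        simp only [card_filter]
    _ = Fintype.card (β j) * (c * #{x | ∀ k ∈ I, A k x = 0}) := by
        rw [card_filter, smul_eq_mul]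
        ring

theorem card_le_pow_mul_card_zeros [Fintype ι] (hA : ∀ k, IsMultiadditiveOn (A k) (S k))
    (hS : ∀ k, (S k).Nonempty) (I : Finset κ) :
    Fintype.card (∀ i, β i) ≤ Fintype.card W ^ #I * #{x | ∀ k ∈ I, A k x = 0} := by
  suffices ∀ U : Finset ι, ∀ I : Finset κ, (∀ k ∈ I, S k ⊆ U) →
      Fintype.card (∀ i, β i) ≤ Fintype.card W ^ #I * #{x | ∀ k ∈ I, A k x = 0} from
    this univ I fun k _ => subset_univ _
  intro U
  induction U using Finset.induction_on with
  | empty =>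
    intro I hI
    obtain rfl : I = ∅ := eq_empty_of_forall_notMem fun k hk =>
      (hS k).ne_empty (subset_empty.1 (hI k hk))
    simp
  | insert j U hj ih =>
    intro I hI
    have hI₂ : ∀ k ∈ I.filter (j ∉ S ·), S k ⊆ U := fun k hk =>
      (subset_insert_iff_of_notMem (mem_filter.1 hk).2).1 (hI k (mem_filter.1 hk).1)
    calc Fintype.card (∀ i, β i)
        ≤ Fintype.card W ^ #{k ∈ I | j ∉ S k} *
            #{x | ∀ k ∈ I, j ∉ S k → A k x = 0} := by
          simpa only [mem_filter, and_imp] using ih _ hI₂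
      _ ≤ Fintype.card W ^ #{k ∈ I | j ∉ S k} *
            (Fintype.card W ^ #{k ∈ I | j ∈ S k} * #{x | ∀ k ∈ I, A k x = 0}) :=
          Nat.mul_le_mul_left _ (card_zeros_le_pow_mul_card_zeros hA I j)
      _ = Fintype.card W ^ #I * #{x | ∀ k ∈ I, A k x = 0} := by
          rw [← mul_assoc, ← pow_add, add_comm, card_filter_add_card_filter_not]

end ZeroCount

theorem MultilinearMap.isMultiadditiveOn_comp_val {R ι M M₂ : Type*}
    [CommSemiring R] [DecidableEq ι] [AddCommMonoid M] [Module R M]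
    [AddCommMonoid M₂] [Module R M₂] {q : ι → Prop}
    (g : MultilinearMap R (fun _ : Subtype q => M) M₂) :
    IsMultiadditiveOn (fun x : ι → M => g fun i => x i) {i | q i} where
  dependsOn x y hxy := congrArg g (funext fun i => hxy i i.2)
  map_update_add j hj x a b := by
    have h (v : M) :
        (fun i : Subtype q => update x j v i) = update (fun i : Subtype q => x i) ⟨j, hj⟩ v :=
      update_comp_eq_of_injective' x Subtype.val_injective (⟨j, hj⟩ : Subtype q) v
    rw [h, h, h]
    exact g.map_update_add _ _ a b

theorem MultilinearMap.apply_eq_sum_prod_mul {R ι κ : Type*} [CommSemiring R] [Fintype ι]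
    [DecidableEq ι] [Fintype κ] [DecidableEq κ] (T : MultilinearMap R (fun _ : ι => κ → R) R)
    (x : ι → κ → R) :
    T x = ∑ m : ι → κ, (∏ i, x i (m i)) * T fun i => Pi.single (m i) 1 := by
  conv_lhs => rw [← funext fun i => univ_sum_single (x i)]
  rw [T.map_sum]
  refine sum_congr rfl fun m _ => ?_
  rw [← smul_eq_mul, ← T.map_smul_univ]
  congr 1
  funext i
  rw [← Pi.single_smul, smul_eq_mul, mul_one]

section PartitionRank

variable {p n d : ℕ}

theorem PRankOne.smul {T : Tensor p n d} (h : PRankOne T) (c : ZMod p) : PRankOne (c • T) := by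
  obtain ⟨A, hA, hAu, T₁, T₂, hT⟩ := h
  exact ⟨A, hA, hAu, c • T₁, T₂, fun x => by simp [hT, mul_assoc]⟩

theorem prankOne_mkPiAlgebra_compLinearMap (hd : 2 ≤ d)
    (ℓ : Fin d → (Fin n → ZMod p) →ₗ[ZMod p] ZMod p) :
    PRankOne ((MultilinearMap.mkPiAlgebra (ZMod p) (Fin d) (ZMod p)).compLinearMap ℓ) := by
  have : Nontrivial (Fin d) := Fin.nontrivial_iff_two_le.2 hd
  obtain ⟨z, o, hzo⟩ := exists_pair_ne (Fin d)
  refine ⟨{z}, singleton_nonempty z, fun h => hzo (mem_singleton.1 (h ▸ mem_univ o)).symm,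
    (MultilinearMap.mkPiAlgebra _ _ _).compLinearMap fun i => ℓ i.1,
    (MultilinearMap.mkPiAlgebra _ _ _).compLinearMap fun i => ℓ i.1, fun x => ?_⟩
  simp only [MultilinearMap.compLinearMap_apply, MultilinearMap.mkPiAlgebra_apply]
  convert (Fintype.prod_subtype_mul_prod_subtype (· ∈ ({z} : Finset (Fin d)))
    fun i => ℓ i (x i)).symm

theorem exists_sum_prankOne (hd : 2 ≤ d) (T : Tensor p n d) :
    ∃ r, ∃ f : Fin r → Tensor p n d, (∀ i, PRankOne (f i)) ∧ T = ∑ i, f i := by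
  let f : (Fin d → Fin n) → Tensor p n d := fun m =>
    (T fun i => Pi.single (m i) 1) •
      (MultilinearMap.mkPiAlgebra (ZMod p) (Fin d) (ZMod p)).compLinearMap
        fun i => LinearMap.proj (m i)
  refine ⟨_, f ∘ (Fintype.equivFin _).symm,
    fun _ => (prankOne_mkPiAlgebra_compLinearMap hd _).smul _, ?_⟩
  simp only [comp_apply, Equiv.sum_comp]
  refine MultilinearMap.ext fun x => ?_
  simp [f, T.apply_eq_sum_prod_mul x, mul_comm]

theorem PRankOne.exists_multiadditive_factor {T : Tensor p n d} (h : PRankOne T) (j : Fin d) :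
    ∃ S : Finset (Fin d), S.Nonempty ∧ j ∉ S ∧
      ∃ A B : (Fin d → Fin n → ZMod p) → ZMod p,
      IsMultiadditiveOn A S ∧ ∀ x, T x = A x * B x := by
  obtain ⟨S, hS, hSu, T₁, T₂, hT⟩ := h
  by_cases hj : j ∈ S
  · refine ⟨Sᶜ, by simpa [nonempty_iff_ne_empty] using hSu, by simpa using hj, _, _, ?_,
      fun x => (hT x).trans (mul_comm _ _)⟩
    rw [coe_compl]
    exact T₂.isMultiadditiveOn_comp_val
  · exact ⟨S, hS, hj, _, _, T₁.isMultiadditiveOn_comp_val, hT⟩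

end PartitionRank

theorem MultilinearMap.sum_addChar_eq_card {R ι K M₂ : Type*} {M : ι → Type*} [CommSemiring R]
    [Fintype ι] [DecidableEq ι] [∀ i, AddCommGroup (M i)] [∀ i, Module R (M i)]
    [∀ i, Fintype (M i)] [AddCommGroup M₂] [Module R M₂] [Field K] [CharZero K]
    (T : MultilinearMap R M M₂) (χ : AddChar M₂ K) (j : ι)
    [DecidablePred fun x : ∀ i, M i => ∀ v, χ (T (update x j v)) = 1] :
    ∑ x, χ (T x) = #{x | ∀ v, χ (T (update x j v)) = 1} := by
  classical
  have hfibre (x : ∀ i, M i) : ∑ v, χ (T (update x j v)) =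
      if ∀ v, χ (T (update x j v)) = 1 then (Fintype.card (M j) : K) else 0 := by
    let ψ := χ.compAddMonoidHom (T.toLinearMap x j).toAddMonoidHom
    calc ∑ v, χ (T (update x j v)) = ∑ v, ψ v := rfl
      _ = if ψ = 0 then (Fintype.card (M j) : K) else 0 := ψ.sum_eq_ite
      _ = _ := by simp [ψ, AddChar.ext_iff]
  refine mul_left_cancel₀ (Nat.cast_ne_zero.2 (Fintype.card_ne_zero (α := M j))) ?_
  rw [← nsmul_eq_mul, ← sum_sum_update_eq_card_smul j, Finset.natCast_card_filter, mul_sum]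
  simp only [hfibre, mul_ite, mul_one, mul_zero]

section Bias

variable {p n d : ℕ}

theorem bias_re_eq [NeZero p] (T : Tensor p n d) (χ : AddChar (ZMod p) ℂ) (j : Fin d)
    [DecidablePred fun x : Fin d → Fin n → ZMod p => ∀ v, χ (T (update x j v)) = 1] :
    (bias T χ).re =
      #{x | ∀ v, χ (T (update x j v)) = 1} / Fintype.card (Fin d → Fin n → ZMod p) := by
  rw [bias, T.sum_addChar_eq_card χ j, ← Complex.ofReal_natCast, ← Complex.ofReal_natCast,
    ← Complex.ofReal_div, Complex.ofReal_re]

theorem arank_le_of_card_le [Fact p.Prime] (T : Tensor p n d) (χ : AddChar (ZMod p) ℂ)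
    (j : Fin d) (r : ℕ)
    (h : Fintype.card (Fin d → Fin n → ZMod p) ≤ p ^ r * #{x | ∀ v, T (update x j v) = 0}) :
    arank T χ ≤ r := by
  classical
  have hp : (1 : ℝ) < p := mod_cast (Fact.out : p.Prime).one_lt
  have hzeros : #{x | ∀ v, T (update x j v) = 0} ≤ #{x | ∀ v, χ (T (update x j v)) = 1} :=
    card_le_card fun x hx => by
      simp only [mem_filter, mem_univ, true_and] at hx ⊢
      exact fun v => by rw [hx v, AddChar.map_zero_eq_one]
  have hbias : (p : ℝ) ^ (-(r : ℝ)) ≤ (bias T χ).re := by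
    rw [bias_re_eq T χ j, Real.rpow_neg (by positivity), Real.rpow_natCast, inv_eq_one_div,
      div_le_div_iff₀ (by positivity) (Nat.cast_pos.2 Fintype.card_pos), one_mul,
      mul_comm]
    exact_mod_cast h.trans (Nat.mul_le_mul_left _ hzeros)
  rw [arank, neg_le, Real.le_logb_iff_rpow_le hp ((by positivity : (0 : ℝ) < _).trans_le hbias)]
  exact hbias

end Bias

theorem stmt4_general (p n d : ℕ) [hp : Fact p.Prime] (hd : 2 ≤ d)
    (χ : AddChar (ZMod p) ℂ) (T : Tensor p n d) :
    arank T χ ≤ (prank T : ℝ) := by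
  obtain ⟨f, hf, hT⟩ : prank T ∈
      {r | ∃ f : Fin r → Tensor p n d, (∀ i, PRankOne (f i)) ∧ T = ∑ i, f i} :=
    Nat.sInf_mem (exists_sum_prankOne hd T)
  let j : Fin d := ⟨0, by omega⟩
  choose S hS hjS A B hA hfAB using fun i => (hf i).exists_multiadditive_factor j
  have hcount := card_le_pow_mul_card_zeros hA hS univ
  rw [ZMod.card, card_univ, Fintype.card_fin] at hcount
  have hvanish (x) (hx : ∀ i, A i x = 0) (v) : T (update x j v) = 0 := by
    have hAj (i) : A i (update x j v) = A i x :=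
      (hA i).dependsOn fun k hk => update_of_ne (ne_of_mem_of_not_mem hk (hjS i)) v x
    simp [hT, hfAB, hAj, hx]
  refine arank_le_of_card_le T χ j _ (hcount.trans (Nat.mul_le_mul_left _ (card_le_card ?_)))
  intro x hx
  simp only [mem_filter, mem_univ, true_and, forall_const] at hx ⊢
  exact hvanish x hx

/-- Let `p` be a prime, `d ≥ 2`, `n ≥ 1` and `T` a `d`-tensor on `𝔽_p^n`. Then
`arank(T) ≤ prank(T)`. -/
theorem stmt4 (p n d : ℕ) [hp : Fact p.Prime] (hd : 2 ≤ d) (hn : 1 ≤ n)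
    (χ : AddChar (ZMod p) ℂ) (hχ : χ ≠ 1) (T : Tensor p n d) :
    arank T χ ≤ (prank T : ℝ) :=
  stmt4_general p n d (hp := hp) hd χ T
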